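/- For a state ρ of class E₀ with a+b=1 and fixed linear entropy S_L(ρ)=s, one has m(ρ) = 1 + 4(a-a²) - (3/2)s, which is maximized over a at a = 1/2, giving m = 2 - (3/2)s for s∈[0,2/3]. -/

import Mathlib

open Matrix Kronecker Complex ComplexOrder

noncomputable section
open scoped Classical

/-- Pauli matrices. -/
def pauli : Fin 3 → Matrix (Fin 2) (Fin 2) ℂ
  | 0 => !![0, 1; 1, 0]
  | 1 => !![0, -Complex.I; Complex.I, 0]
  | 2 => !![1, 0; 0, -1]

/-- Kronecker product of two one-qubit operators, reindexed to a 4×4 matrix. -/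
def kron4 (A B : Matrix (Fin 2) (Fin 2) ℂ) : Matrix (Fin 4) (Fin 4) ℂ :=
  Matrix.reindex finProdFinEquiv finProdFinEquiv (A ⊗ₖ B)

/-- A density matrix: positive semidefinite with unit trace. -/
def IsDensity {n : ℕ} (ρ : Matrix (Fin n) (Fin n) ℂ) : Prop :=
  ρ.PosSemidef ∧ ρ.trace = 1

/-- The spin-flipped matrix ρ̃ = (σ₂⊗σ₂) ρ̄ (σ₂⊗σ₂). -/
def tildeMat (ρ : Matrix (Fin 4) (Fin 4) ℂ) : Matrix (Fin 4) (Fin 4) ℂ :=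
  kron4 (pauli 1) (pauli 1) * ρ.map (starRingEnd ℂ) * kron4 (pauli 1) (pauli 1)

/-- Positive square root of a positive semidefinite matrix (0 otherwise). -/
def msqrt {n : ℕ} (A : Matrix (Fin n) (Fin n) ℂ) : Matrix (Fin n) (Fin n) ℂ :=
  if h : A.PosSemidef then
    (h.1.eigenvectorUnitary : Matrix (Fin n) (Fin n) ℂ) *
      Matrix.diagonal (fun i => ((Real.sqrt (h.1.eigenvalues i) : ℝ) : ℂ)) *
      (star h.1.eigenvectorUnitary : Matrix (Fin n) (Fin n) ℂ) else 0

/-- ρ̂ = √(√ρ ρ̃ √ρ). -/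
def hatMat (ρ : Matrix (Fin 4) (Fin 4) ℂ) : Matrix (Fin 4) (Fin 4) ℂ :=
  msqrt (msqrt ρ * tildeMat ρ * msqrt ρ)

/-- Eigenvalues of a Hermitian matrix (0 otherwise). -/
def evalsC {n : ℕ} (A : Matrix (Fin n) (Fin n) ℂ) : Fin n → ℝ :=
  if h : A.IsHermitian then h.eigenvalues else 0

/-- The concurrence C(ρ) = max(0, 2 λ_max(ρ̂) − tr ρ̂). -/
def concurrence (ρ : Matrix (Fin 4) (Fin 4) ℂ) : ℝ :=
  max 0 (2 * (⨆ i, evalsC (hatMat ρ) i) - ∑ i, evalsC (hatMat ρ) i)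

/-- Correlation matrix T_ρ with entries tr(ρ σₙ⊗σₘ). -/
def Tmat (ρ : Matrix (Fin 4) (Fin 4) ℂ) : Matrix (Fin 3) (Fin 3) ℝ :=
  fun n m => ((ρ * kron4 (pauli n) (pauli m)).trace).re

/-- U_ρ = T_ρᵀ T_ρ. -/
def Umat (ρ : Matrix (Fin 4) (Fin 4) ℂ) : Matrix (Fin 3) (Fin 3) ℝ :=
  (Tmat ρ)ᵀ * Tmat ρ

/-- Eigenvalues of a real symmetric matrix (0 otherwise). -/
def evalsR {n : ℕ} (A : Matrix (Fin n) (Fin n) ℝ) : Fin n → ℝ :=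
  if h : A.IsHermitian then h.eigenvalues else 0

/-- The Horodecki quantity m(ρ) = max_{j<k} (u_j + u_k). -/
def mval (ρ : Matrix (Fin 4) (Fin 4) ℂ) : ℝ :=
  (Finset.univ.filter (fun p : Fin 3 × Fin 3 => p.1 < p.2)).sup'
    (by decide) (fun p => evalsR (Umat ρ) p.1 + evalsR (Umat ρ) p.2)

/-- Normalized linear entropy S_L(ρ) = (4/3)(1 − tr ρ²). -/
def linEntropy (ρ : Matrix (Fin 4) (Fin 4) ℂ) : ℝ :=
  (4/3) * (1 - ((ρ * ρ).trace).re)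

/-- The class E₀ state with parameters a, b, c, θ. -/
def rhoE0 (a b c θ : ℝ) : Matrix (Fin 4) (Fin 4) ℂ :=
  !![0, 0, 0, 0;
     0, (a : ℂ), (c/2 : ℂ) * Complex.exp (θ * Complex.I), 0;
     0, (c/2 : ℂ) * Complex.exp (-θ * Complex.I), (b : ℂ), 0;
     0, 0, 0, ((1 - a - b : ℝ) : ℂ)]

/-- The maximal-CHSH-violation states ρ_MVB. -/
def rhoMVB (β θ : ℝ) : Matrix (Fin 4) (Fin 4) ℂ :=
  rhoE0 (1/2) (1/2) (Real.sqrt (β - 1)) θ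


/-- Helper: `exp(-(θi)) = cos θ - i sin θ`. -/
lemma exp_neg_theta (θ : ℝ) : Complex.exp (-((θ:ℂ) * Complex.I)) =
    Complex.cos θ - Complex.sin θ * Complex.I := by
  rw [neg_mul_eq_neg_mul, Complex.exp_mul_I, Complex.cos_neg, Complex.sin_neg]; ring

set_option maxHeartbeats 1000000 in
lemma Tmat_rhoE0 (a c θ : ℝ) : Tmat (rhoE0 a (1-a) c θ) =
    !![c*Real.cos θ, c*Real.sin θ, 0;
       -(c*Real.sin θ), c*Real.cos θ, 0;
       0, 0, -1] := by
  ext n m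
  fin_cases n <;> fin_cases m <;>
    simp [Tmat, rhoE0, kron4, pauli, Matrix.trace, Matrix.mul_apply, Fin.sum_univ_four,
      Matrix.reindex_apply, Matrix.submatrix_apply, Matrix.kroneckerMap_apply, finProdFinEquiv,
      Complex.exp_mul_I, exp_neg_theta, Complex.ext_iff, Matrix.vecMul, dotProduct,
      Fin.divNat, Fin.modNat, Complex.cos_ofReal_re, Complex.sin_ofReal_re,
      Complex.cos_ofReal_im, Complex.sin_ofReal_im,
      Matrix.cons_val', Matrix.cons_val_zero, Matrix.cons_val_one, Fin.sum_univ_succ] <;>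
    ring

lemma Umat_rhoE0 (a c θ : ℝ) : Umat (rhoE0 a (1-a) c θ) =
    Matrix.diagonal ![c^2, c^2, 1] := by
  rw [Umat, Tmat_rhoE0]
  ext n m
  fin_cases n <;> fin_cases m <;>
    simp [Matrix.mul_apply, Fin.sum_univ_three, Matrix.diagonal, Matrix.transpose_apply,
      Matrix.vecHead, Matrix.vecTail, Function.comp] <;>
    nlinarith [Real.sin_sq_add_cos_sq θ]

lemma trace_sq_rhoE0 (a c θ : ℝ) :
    (((rhoE0 a (1-a) c θ) * (rhoE0 a (1-a) c θ)).trace).re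
      = a^2 + (1-a)^2 + c^2/2 := by
  simp [rhoE0, Matrix.trace, Matrix.mul_apply, Fin.sum_univ_four,
    Complex.exp_mul_I, exp_neg_theta, Complex.ext_iff, Matrix.vecMul, dotProduct,
    Complex.cos_ofReal_re, Complex.sin_ofReal_re, Complex.cos_ofReal_im, Complex.sin_ofReal_im,
    Matrix.vecHead, Matrix.vecTail, Function.comp]
  nlinarith [Real.sin_sq_add_cos_sq θ]

lemma eig_mem {n : ℕ} {A : Matrix (Fin n) (Fin n) ℝ} (hA : A.IsHermitian) (d : Fin n → ℝ)
    (hAd : A = Matrix.diagonal d) (i : Fin n) : ∃ j, hA.eigenvalues i = d j := by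
  have h := hA.mulVec_eigenvectorBasis i
  have hne : (⇑(hA.eigenvectorBasis i) : Fin n → ℝ) ≠ 0 := by
    intro h0
    have := hA.eigenvectorBasis.orthonormal.ne_zero i
    apply this
    ext j
    exact congrFun h0 j
  obtain ⟨j, hj⟩ := Function.ne_iff.mp hne
  refine ⟨j, ?_⟩
  have h2 : Matrix.diagonal d *ᵥ (⇑(hA.eigenvectorBasis i) : Fin n → ℝ)
      = hA.eigenvalues i • (⇑(hA.eigenvectorBasis i) : Fin n → ℝ) := by
    rw [← hAd]; exact h
  have h3 := congrFun h2 j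
  simp only [Matrix.mulVec_diagonal, Pi.smul_apply, smul_eq_mul] at h3
  have hj' : (hA.eigenvectorBasis i) j ≠ 0 := by simpa using hj
  exact (mul_right_cancel₀ hj' h3).symm

lemma sum_eig {n : ℕ} {A : Matrix (Fin n) (Fin n) ℝ} (hA : A.IsHermitian) :
    ∑ i, hA.eigenvalues i = A.trace := by
  rw [hA.trace_eq_sum_eigenvalues]
  simp

lemma sup_pairs (u : Fin 3 → ℝ) (c2 : ℝ) (hle : c2 ≤ 1)
    (hmem : ∀ i, u i = c2 ∨ u i = 1) (hsum : u 0 + u 1 + u 2 = 1 + 2*c2) :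
    (Finset.univ.filter (fun p : Fin 3 × Fin 3 => p.1 < p.2)).sup'
      (by decide) (fun p => u p.1 + u p.2) = 1 + c2 := by
  have hge : ∀ i, c2 ≤ u i := by
    intro i; rcases hmem i with h|h <;> rw [h]; exact hle
  apply le_antisymm
  · apply Finset.sup'_le
    intro p hp
    fin_cases hp <;> simp <;> linarith [hge 0, hge 1, hge 2]
  · rcases hmem 0 with h0|h0
    · calc 1 + c2 ≤ u (1:Fin 3) + u (2:Fin 3) := by linarith
        _ ≤ _ := Finset.le_sup' (f := fun p : Fin 3 × Fin 3 => u p.1 + u p.2)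
            (b := (1,2)) (by decide)
    · rcases hmem 1 with h1|h1
      · calc 1 + c2 ≤ u (0:Fin 3) + u (2:Fin 3) := by linarith
          _ ≤ _ := Finset.le_sup' (f := fun p : Fin 3 × Fin 3 => u p.1 + u p.2)
              (b := (0,2)) (by decide)
      · calc 1 + c2 ≤ u (0:Fin 3) + u (1:Fin 3) := by
              rcases hmem 2 with h2|h2 <;> linarith
          _ ≤ _ := Finset.le_sup' (f := fun p : Fin 3 × Fin 3 => u p.1 + u p.2)
              (b := (0,1)) (by decide)

lemma mval_rhoE0_eq (a c θ : ℝ) (hc2 : c^2 ≤ 1) :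
    mval (rhoE0 a (1-a) c θ) = 1 + c^2 := by
  have hU := Umat_rhoE0 a c θ
  have hA : (Umat (rhoE0 a (1-a) c θ)).IsHermitian := by
    rw [hU]; exact Matrix.isHermitian_diagonal _
  have hu : evalsR (Umat (rhoE0 a (1-a) c θ)) = hA.eigenvalues := dif_pos hA
  have htr : (Umat (rhoE0 a (1-a) c θ)).trace = 1 + 2*c^2 := by
    rw [hU]; rw [Matrix.trace_diagonal, Fin.sum_univ_three]; simp; ring
  unfold mval
  rw [hu]
  apply sup_pairs _ _ hc2
  · intro i
    obtain ⟨j, hj⟩ := eig_mem hA _ hU i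
    fin_cases j <;> simp at hj
    · exact Or.inl hj
    · exact Or.inl hj
    · exact Or.inr hj
  · have hsum := sum_eig hA
    rw [htr, Fin.sum_univ_three] at hsum
    linarith

/-- class E₀ with a + b = 1 and fixed linear entropy s. -/
theorem mval_rhoE0_fixed_entropy (a c θ s : ℝ) (ha : 0 ≤ a) (ha1 : a ≤ 1)
    (hc0 : 0 ≤ c) (hc1 : c ≤ 1) (habc : c ^ 2 / 4 ≤ a * (1 - a))
    (hs : linEntropy (rhoE0 a (1 - a) c θ) = s) :
    mval (rhoE0 a (1 - a) c θ) = 1 + 4 * (a - a ^ 2) - (3/2) * s ∧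
    mval (rhoE0 a (1 - a) c θ) ≤ 2 - (3/2) * s ∧
    (a = 1/2 → mval (rhoE0 a (1 - a) c θ) = 2 - (3/2) * s) ∧
    0 ≤ s ∧ s ≤ 2/3 := by
  have hE : s = (4/3)*(1 - (a^2+(1-a)^2+c^2/2)) := by
    rw [← hs, linEntropy, trace_sq_rhoE0]
  have hc2 : c^2 ≤ 1 := by nlinarith
  have hm := mval_rhoE0_eq a c θ hc2
  refine ⟨by rw [hm]; ring_nf; ring_nf at hE; linarith, ?_, ?_, ?_, ?_⟩
  · rw [hm]; nlinarith [sq_nonneg (2*a-1)]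
  · intro h; subst h; rw [hm]; ring_nf; ring_nf at hE; linarith
  · nlinarith
  · nlinarith [sq_nonneg (2*a-1), sq_nonneg c]

end
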